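/- Let F₁ and F₂ be eligible 3-uniform hypergraphs (copies of F), glued along the common good set A to form F'. For any U' ⊆ V(F') with |U'| ≥ 2, writing U⁽¹⁾ = U' ∩ V(F₁) and U⁽²⁾ = U' ∩ V(F₂), one has Δ_{F'}(U') = Δ_{F₁}(U⁽¹⁾) + Δ_{F₂}(U⁽²⁾) − |A ∩ U'|, and consequently Δ_{F'}(U') ≥ 2. -/

import Mathlib

/-- A 3-uniform hypergraph on vertex type `V`: a finite set of edges, each of size 3. -/
structure Hypergraph3 (V : Type*) where
  edges : Finset (Finset V)
  card3 : ∀ e ∈ edges, e.card = 3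

variable {V : Type*} [DecidableEq V]

/-- The edges of `F` contained in the vertex set `U`. -/
def edgesIn (F : Hypergraph3 V) (U : Finset V) : Finset (Finset V) :=
  F.edges.filter (fun e => e ⊆ U)

/-- The deficiency `Δ(U) = |U| - e(F[U])`. -/
def defic (F : Hypergraph3 V) (U : Finset V) : ℤ :=
  (U.card : ℤ) - ((edgesIn F U).card : ℤ)

/-- `A` is independent in `F` if no edge of `F` is contained in `A`. -/
def Indep (F : Hypergraph3 V) (A : Finset V) : Prop :=
  ∀ e ∈ F.edges, ¬ e ⊆ A

/-- `A` is good: independent, and every strict superset `U` has `Δ(U) ≥ |A| + 1`. -/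
def Good (F : Hypergraph3 V) (A : Finset V) : Prop :=
  Indep F A ∧ ∀ U : Finset V, A ⊂ U → (A.card : ℤ) + 1 ≤ defic F U

variable [Fintype V]

/-- The map identifying the first copy `V` inside `V ⊕ {x // x ∉ A}` along `A`. -/
def glueMap (A : Finset V) : V → V ⊕ {x : V // x ∉ A} :=
  fun v => if h : v ∈ A then Sum.inl v else Sum.inr ⟨v, h⟩

lemma glueMap_injective (A : Finset V) : Function.Injective (glueMap A) := by
  intro a b h
  have ha := congrArg (Sum.elim (id : V → V) Subtype.val) h
  simp only [glueMap] at ha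
  split_ifs at ha <;> simpa using ha

/-- The hypergraph obtained from two vertex-disjoint copies of `F` by identifying the
two copies of `A` pointwise. -/
def glue (F : Hypergraph3 V) (A : Finset V) : Hypergraph3 (V ⊕ {x : V // x ∉ A}) where
  edges := F.edges.image (Finset.image Sum.inl) ∪ F.edges.image (Finset.image (glueMap A))
  card3 := by
    intro e he
    simp only [Finset.mem_union, Finset.mem_image] at he
    rcases he with ⟨f, hf, rfl⟩ | ⟨f, hf, rfl⟩
    · rw [Finset.card_image_of_injective _ Sum.inl_injective]; exact F.card3 f hf
    · rw [Finset.card_image_of_injective _ (glueMap_injective A)]; exact F.card3 f hf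

/-- The degree of a vertex: the number of edges containing it. -/
def deg (F : Hypergraph3 V) (x : V) : ℕ :=
  (F.edges.filter (fun e => x ∈ e)).card

/-- `F` is eligible with data `A, B, u, v` and deficiency `k`:
(i) `A, B` are disjoint good sets of size `k - 1`;
(ii) `u ≠ v` are vertices outside `A ∪ B`;
(iii) at most `e(F)/4 - k` vertices have degree `> 1`, every edge contains at most one
vertex of degree `1`, and there are no isolated vertices;
(iv) every `U` with `|U| ≥ 2` has `Δ(U) ≥ 2`. -/
def EligibleWith (F : Hypergraph3 V) (A B : Finset V) (u v : V) (k : ℕ) : Prop :=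
  1 ≤ k ∧ defic F Finset.univ = (k : ℤ) ∧
  Good F A ∧ Good F B ∧ Disjoint A B ∧ A.card = k - 1 ∧ B.card = k - 1 ∧
  u ≠ v ∧ u ∉ A ∪ B ∧ v ∉ A ∪ B ∧
  (((Finset.univ.filter (fun x => 1 < deg F x)).card : ℚ) ≤ (F.edges.card : ℚ) / 4 - k) ∧
  (∀ e ∈ F.edges, (e.filter (fun x => deg F x = 1)).card ≤ 1) ∧
  (∀ x : V, 1 ≤ deg F x) ∧
  (∀ U : Finset V, 2 ≤ U.card → 2 ≤ defic F U)

/-- `F` is eligible. -/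
def Eligible (F : Hypergraph3 V) : Prop :=
  ∃ A B u v k, EligibleWith F A B u v k

/-!
An edge of `F` cannot lie inside the independent set `A`, so every edge of `F'` inside `U'` comes
from exactly one copy, while the vertices of `U'` counted twice by `U⁽¹⁾` and `U⁽²⁾` are exactly
those of `A ∩ U'`; this gives the formula. For the bound, a trace not contained in `A` has
deficiency at least `|A ∩ U'| + 1` because `A` is good. A trace contained in `A` spans no edge, so
its deficiency is its size `|A ∩ U'|`, and then `Δ(U')` is the deficiency of the other trace, which
has the same size as `U'` and hence deficiency at least `2`.
-/

open Finset

section Deficiency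

variable {V : Type*} [DecidableEq V] (F : Hypergraph3 V)

lemma card_edgesIn_mono {U W : Finset V} (h : U ⊆ W) : #(edgesIn F U) ≤ #(edgesIn F W) :=
  card_le_card (monotone_filter_right _ fun _ _ he => he.trans h)

lemma defic_le_defic_add_card_sdiff {U W : Finset V} (h : U ⊆ W) :
    defic F W ≤ defic F U + #(W \ U) := by
  have := card_edgesIn_mono F h
  have := card_sdiff_add_card_eq_card h
  simp only [defic]
  omega

variable {F}

lemma Indep.defic_eq_card {A U : Finset V} (hA : Indep F A) (hU : U ⊆ A) : defic F U = #U := by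
  have : edgesIn F U = ∅ := filter_eq_empty_iff.2 fun e he hsub => hA e he (hsub.trans hU)
  simp [defic, this]

lemma Good.inter_card_add_one_le_defic {A U : Finset V} (hA : Good F A) (hU : ¬U ⊆ A) :
    #(A ∩ U) + 1 ≤ defic F U := by
  have hgood := hA.2 (U ∪ A) ⟨subset_union_right, fun h => hU (subset_union_left.trans h)⟩
  have hunion := defic_le_defic_add_card_sdiff F (subset_union_left (s₁ := U) (s₂ := A))
  have := card_sdiff_add_card_inter A U
  rw [union_sdiff_left] at hunion
  omega

end Deficiency

section Trace

variable {V W : Type*} [Fintype V] [DecidableEq W]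

/-- `U⁽ⁱ⁾` in the paper's notation, when `f` embeds the `i`-th copy of `V`. -/
def trace (f : V → W) (U' : Finset W) : Finset V :=
  univ.filter fun x => f x ∈ U'

@[simp]
lemma mem_trace {f : V → W} {U' : Finset W} {x : V} : x ∈ trace f U' ↔ f x ∈ U' := by
  simp [trace]

end Trace

section Gluing

variable {V : Type*} [DecidableEq V] {A : Finset V}

lemma glueMap_of_mem {a : V} (ha : a ∈ A) : glueMap A a = Sum.inl a := dif_pos ha

lemma glueMap_of_notMem {a : V} (ha : a ∉ A) : glueMap A a = Sum.inr ⟨a, ha⟩ := dif_neg ha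

lemma disjoint_glue_edges {F : Hypergraph3 V} (hA : Indep F A) :
    Disjoint (F.edges.image (image Sum.inl)) (F.edges.image (image (glueMap A))) := by
  simp only [disjoint_left, mem_image]
  rintro _ ⟨e, -, rfl⟩ ⟨e', he', heq⟩
  obtain ⟨x, hx, hxA⟩ := not_subset.1 (hA e' he')
  have : glueMap A x ∈ e.image Sum.inl := heq ▸ mem_image_of_mem _ hx
  simp [glueMap_of_notMem hxA] at this

variable [Fintype V]

lemma card_filter_image_image_subset {W : Type*} [DecidableEq W] {f : V → W}
    (hf : Function.Injective f) (F : Hypergraph3 V) (U' : Finset W) :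
    #((F.edges.image (image f)).filter (· ⊆ U')) = #(edgesIn F (trace f U')) := by
  rw [filter_image, card_image_of_injective _ (image_injective hf)]
  simp [edgesIn, subset_iff]

lemma card_edgesIn_glue {F : Hypergraph3 V} (hA : Indep F A) (U' : Finset (V ⊕ {x // x ∉ A})) :
    #(edgesIn (glue F A) U') =
      #(edgesIn F (trace Sum.inl U')) + #(edgesIn F (trace (glueMap A) U')) := by
  rw [edgesIn, glue, filter_union,
    card_union_of_disjoint ((disjoint_glue_edges hA).mono (filter_subset _ _) (filter_subset _ _)),
    card_filter_image_image_subset Sum.inl_injective,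
    card_filter_image_image_subset (glueMap_injective A)]

lemma inter_trace_inl (U' : Finset (V ⊕ {x // x ∉ A})) :
    A ∩ trace Sum.inl U' = A.filter fun a => Sum.inl a ∈ U' := by
  ext; simp

lemma inter_trace_glueMap (U' : Finset (V ⊕ {x // x ∉ A})) :
    A ∩ trace (glueMap A) U' = A.filter fun a => Sum.inl a ∈ U' := by
  ext x
  by_cases hx : x ∈ A <;> simp [hx, glueMap_of_mem]

lemma card_add_card_filter_eq_card_trace_add (U' : Finset (V ⊕ {x // x ∉ A})) :
    #U' + #(A.filter fun a => Sum.inl a ∈ U') =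
      #(trace Sum.inl U') + #(trace (glueMap A) U') := by
  have hl : U'.toLeft = trace Sum.inl U' := by ext; simp
  have hr : U'.toRight = (trace (glueMap A) U').subtype (· ∉ A) := by
    ext ⟨x, hx⟩; simp [glueMap_of_notMem hx]
  rw [← card_toLeft_add_card_toRight, hl, hr, card_subtype, ← inter_trace_glueMap, inter_comm,
    ← filter_mem_eq_inter, ← card_filter_add_card_filter_not (s := trace (glueMap A) U') (· ∈ A)]
  omega

theorem defic_glue {F : Hypergraph3 V} (hA : Indep F A) (U' : Finset (V ⊕ {x // x ∉ A})) :
    defic (glue F A) U' = defic F (trace Sum.inl U') + defic F (trace (glueMap A) U') -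
      #(A.filter fun a => Sum.inl a ∈ U') := by
  have := card_edgesIn_glue hA U'
  have := card_add_card_filter_eq_card_trace_add U'
  simp only [defic]
  omega

theorem two_le_defic_glue {F : Hypergraph3 V} (hA : Good F A)
    (h2 : ∀ U : Finset V, 2 ≤ #U → 2 ≤ defic F U) {U' : Finset (V ⊕ {x // x ∉ A})}
    (hU' : 2 ≤ #U') : 2 ≤ defic (glue F A) U' := by
  set a := #(A.filter fun a => Sum.inl a ∈ U')
  have bound : ∀ U, #(A ∩ U) = a → (defic F U = #U ∧ #U = a) ∨ a + 1 ≤ defic F U := by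
    intro U hU
    by_cases hsub : U ⊆ A
    · exact .inl ⟨hA.1.defic_eq_card hsub, by rw [← hU, inter_eq_right.2 hsub]⟩
    · exact .inr (hU ▸ hA.inter_card_add_one_le_defic hsub)
  have := bound _ (congrArg card (inter_trace_inl U'))
  have := bound _ (congrArg card (inter_trace_glueMap U'))
  have := h2 (trace Sum.inl U')
  have := h2 (trace (glueMap A) U')
  have := card_add_card_filter_eq_card_trace_add U'
  rw [defic_glue hA.1]
  omega

end Gluing

/-- in the gluing `F'` of two copies of an eligible `F` along the good set `A`,
for any `U' ⊆ V(F')` with `|U'| ≥ 2`, writing `U⁽¹⁾` and `U⁽²⁾` for the traces of `U'` on the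
two copies, one has `Δ(U') = Δ(U⁽¹⁾) + Δ(U⁽²⁾) - |A ∩ U'|`, and consequently `Δ(U') ≥ 2`. -/
theorem glue_defic_formula (F : Hypergraph3 V) (A B : Finset V) (u v : V) (k : ℕ)
    (h : EligibleWith F A B u v k)
    (U' : Finset (V ⊕ {x : V // x ∉ A})) (hU' : 2 ≤ U'.card) :
    defic (glue F A) U' =
      defic F (Finset.univ.filter (fun x => Sum.inl x ∈ U')) +
      defic F (Finset.univ.filter (fun x => glueMap A x ∈ U')) -
      ((A.filter (fun a => Sum.inl a ∈ U')).card : ℤ) ∧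
    2 ≤ defic (glue F A) U' := by
  obtain ⟨-, -, hA, -, -, -, -, -, -, -, -, -, -, h2⟩ := h
  exact ⟨defic_glue hA.1 U', two_le_defic_glue hA h2 hU'⟩
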